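/- arXiv:1604.04733 — 2 statements merged into one kernel-verified Lean document; each statement's English description precedes it below -/
import Mathlib

section
/- Let π be an m-fold quadratic Pfister form over F and let c ∈ F^× be an element represented by π. Then π ≃ c·π, and for every d ∈ F^× one has π ⊥ d·π ≃ π ⊥ (cd)·π (that is, ⟨⟨d⟩⟩⊗π ≃ ⟨⟨cd⟩⟩⊗π). -/
/-- The binary quadratic form `[b₁,b₂] : (x,y) ↦ b₁x² + xy + b₂y²` on `F × F`. -/
def binQF (F : Type*) [Field F] (b₁ b₂ : F) : QuadraticForm F (F × F) :=
  LinearMap.BilinMap.toQuadraticMap (LinearMap.mk₂ F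
    (fun p q : F × F => b₁ * (p.1 * q.1) + p.1 * q.2 + b₂ * (p.2 * q.2))
    (fun p p' q => by simp only [Prod.fst_add, Prod.snd_add]; ring)
    (fun a p q => by simp only [Prod.smul_fst, Prod.smul_snd, smul_eq_mul]; ring)
    (fun p q q' => by simp only [Prod.fst_add, Prod.snd_add]; ring)
    (fun a p q => by simp only [Prod.smul_fst, Prod.smul_snd, smul_eq_mul]; ring))

/-- The underlying module of a `(k+1)`-fold quadratic Pfister form: `k` doublings of `F × F`. -/
def PfM (F : Type*) : ℕ → Type _
  | 0 => F × F
  | (k + 1) => PfM F k × PfM F k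

instance PfM.instAddCommGroup (F : Type*) [Field F] : ∀ k, AddCommGroup (PfM F k)
  | 0 => inferInstanceAs (AddCommGroup (F × F))
  | (k + 1) =>
    letI := PfM.instAddCommGroup F k
    inferInstanceAs (AddCommGroup (PfM F k × PfM F k))

instance PfM.instModule (F : Type*) [Field F] : ∀ k, Module F (PfM F k)
  | 0 => inferInstanceAs (Module F (F × F))
  | (k + 1) =>
    letI := PfM.instAddCommGroup F k
    letI := PfM.instModule F k
    inferInstanceAs (Module F (PfM F k × PfM F k))

/-- The `(k+1)`-fold quadratic Pfister form `⟨⟨b₁,…,b_k, c]]`, defined inductively by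
`⟨⟨c]] = [1,c]` and `⟨⟨b₁,…,b_k,c]] = π ⊥ b_k·π` with `π = ⟨⟨b₁,…,b_{k-1},c]]`. -/
def pfisterQF (F : Type*) [Field F] : (k : ℕ) → (Fin k → F) → F → QuadraticForm F (PfM F k)
  | 0, _, c => binQF F 1 c
  | (k + 1), b, c =>
    (pfisterQF F k (b ∘ Fin.castSucc) c).prod
      ((b (Fin.last k)) • pfisterQF F k (b ∘ Fin.castSucc) c)

/-- A quadratic form is an `m`-fold quadratic Pfister form if it is isometric to some
`⟨⟨b₁,…,b_{m-1}, c]]` with `b₁, …, b_{m-1} ∈ F^×` and `c ∈ F`. -/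
def IsPfister {F : Type*} [Field F] {V : Type*} [AddCommGroup V] [Module F V]
    (m : ℕ) (π : QuadraticForm F V) : Prop :=
  ∃ (b : Fin (m - 1) → F) (c : F), (∀ i, b i ≠ 0) ∧
    QuadraticMap.Equivalent π (pfisterQF F (m - 1) b c)

set_option linter.unusedSectionVars false

section Aux
open QuadraticMap

variable {F : Type*} [Field F]
variable {V : Type*} [AddCommGroup V] [Module F V]
variable {W : Type*} [AddCommGroup W] [Module F W]

lemma equiv_smul (a : F) {q₁ : QuadraticForm F V} {q₂ : QuadraticForm F W}
    (h : q₁.Equivalent q₂) : (a • q₁).Equivalent (a • q₂) := by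
  obtain ⟨f⟩ := h
  exact ⟨{ f.toLinearEquiv with
    map_app' := fun m => by
      have hm := f.map_app m
      show a • q₂ (f m) = a • q₁ m
      rw [hm] }⟩

lemma equiv_sq_smul (a : F) (ha : a ≠ 0) (q : QuadraticForm F V) :
    ((a * a) • q).Equivalent q := by
  exact ⟨{ LinearEquiv.smulOfNeZero F V a ha with
    map_app' := fun m => by
      have h : q (a • m) = (a * a) • q m := QuadraticMap.map_smul q a m
      simpa [QuadraticMap.smul_apply] using h }⟩

/-- `x` is a similarity factor of `q`. -/
abbrev IsSim (q : QuadraticForm F V) (x : F) : Prop := q.Equivalent (x • q)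

lemma IsSim.mul {q : QuadraticForm F V} {x y : F} (hx : IsSim q x) (hy : IsSim q y) :
    IsSim q (x * y) := by
  have h := equiv_smul x hy
  rw [smul_smul] at h
  exact hx.trans h

lemma IsSim.sq (a : F) (ha : a ≠ 0) (q : QuadraticForm F V) : IsSim q (a * a) :=
  (equiv_sq_smul a ha q).symm

lemma IsSim.inv {q : QuadraticForm F V} {x : F} (hx : x ≠ 0) (h : IsSim q x) :
    IsSim q x⁻¹ := by
  have h2 : IsSim q (x⁻¹ * x⁻¹ * x) := (IsSim.sq x⁻¹ (inv_ne_zero hx) q).mul h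
  rwa [mul_assoc, inv_mul_cancel₀ hx, mul_one] at h2

lemma smul_prod' (a : F) (q₁ : QuadraticForm F V) (q₂ : QuadraticForm F W) :
    a • q₁.prod q₂ = (a • q₁).prod (a • q₂) := by
  ext x
  simp [QuadraticMap.prod_apply, QuadraticMap.smul_apply, smul_eq_mul, mul_add]

lemma prod_comm_equiv (q₁ : QuadraticForm F V) (q₂ : QuadraticForm F W) :
    (q₁.prod q₂).Equivalent (q₂.prod q₁) := by
  exact ⟨{ LinearEquiv.prodComm F V W with
    map_app' := fun m => by
      simp [QuadraticMap.prod_apply, add_comm] }⟩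

lemma IsSim.prod_smul {q : QuadraticForm F V} {t : F} (s : F) (h : IsSim q t) :
    IsSim (q.prod (s • q)) t := by
  unfold IsSim
  rw [smul_prod', smul_smul]
  have h2 : (s • q).Equivalent ((t * s) • q) := by
    have h3 := equiv_smul s h
    rwa [smul_smul, mul_comm s t] at h3
  exact QuadraticMap.Equivalent.prod h h2

section CharTwo
variable [CharP F 2]

lemma char2 : (2 : F) = 0 := CharP.cast_eq_zero F 2

/-- The key char-2 lemma: `(1+a)` is a similarity factor of `q ⊥ a·q`. -/
lemma step_e (q : QuadraticForm F V) (a : F) (he : 1 + a ≠ 0) :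
    IsSim (q.prod (a • q)) (1 + a) := by
  set e := 1 + a with hedef
  set ρ := q.prod (a • q) with hρ
  set f : (V × V) →ₗ[F] (V × V) := LinearMap.prod
    (LinearMap.fst F V V + a • LinearMap.snd F V V)
    (LinearMap.fst F V V + LinearMap.snd F V V) with hf
  have hfapp : ∀ p : V × V, f p = (p.1 + a • p.2, p.1 + p.2) := fun p => rfl
  have hff : ∀ p : V × V, f (f p) = e • p := by
    rintro ⟨u, v⟩
    rw [hfapp, hfapp]
    simp only [Prod.smul_mk, Prod.mk.injEq]
    constructor
    · match_scalars
      · ring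
      · linear_combination a * (char2 (F := F))
    · match_scalars
      · linear_combination (char2 (F := F))
      · ring
  have hinv : e⁻¹ * e = 1 := inv_mul_cancel₀ he
  set L : (V × V) ≃ₗ[F] (V × V) := LinearEquiv.ofLinear f (e⁻¹ • f)
    (LinearMap.ext fun p => by
      simp only [LinearMap.comp_apply, LinearMap.smul_apply, LinearMap.id_apply,
        _root_.map_smul, hff, smul_smul, hinv, one_smul])
    (LinearMap.ext fun p => by
      simp only [LinearMap.comp_apply, LinearMap.smul_apply, LinearMap.id_apply,
        hff, smul_smul, hinv, one_smul]) with hL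
  have hρf : ∀ p : V × V, ρ (f p) = e * ρ p := by
    rintro ⟨u, v⟩
    rw [hfapp]
    simp only [hρ, QuadraticMap.prod_apply, QuadraticMap.smul_apply, smul_eq_mul]
    have e1 : q (u + a • v) = q u + (a * a) * q v + a * polar q u v := by
      rw [QuadraticMap.map_add (⇑q) u (a • v), QuadraticMap.map_smul, polar_smul_right]
      simp [smul_eq_mul]
    have e2 : q (u + v) = q u + q v + polar q u v := QuadraticMap.map_add (⇑q) u v
    rw [e1, e2, hedef]
    linear_combination (a * polar q u v) * (char2 (F := F))
  refine ⟨{ L.symm with map_app' := fun m => ?_ }⟩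
  have h1 : f (L.symm m) = m := L.apply_symm_apply m
  show (e • ρ) (L.symm m) = ρ m
  rw [QuadraticMap.smul_apply, smul_eq_mul, ← hρf, h1]

/-- Multiplication by `(p, s)` in `F[t]/(t²+t+c)`, as a linear map on `F × F`. -/
def mulBy (c p s : F) : (F × F) →ₗ[F] (F × F) :=
  LinearMap.prod
    (p • LinearMap.fst F F F + (c * s) • LinearMap.snd F F F)
    (s • LinearMap.fst F F F + (p + s) • LinearMap.snd F F F)

lemma mulBy_apply (c p s : F) (z : F × F) :
    mulBy c p s z = (p * z.1 + c * s * z.2, s * z.1 + (p + s) * z.2) := rfl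

lemma binQF_apply (c : F) (z : F × F) :
    binQF F 1 c z = z.1 * z.1 + z.1 * z.2 + c * (z.2 * z.2) := by
  simp [binQF, LinearMap.BilinMap.toQuadraticMap_apply]

lemma binQF_mul (c p s : F) (z : F × F) :
    binQF F 1 c (mulBy c p s z) = (p * p + p * s + c * (s * s)) * binQF F 1 c z := by
  rw [binQF_apply, binQF_apply, mulBy_apply]
  simp only
  linear_combination (c * s ^ 2 * z.2 ^ 2 + c * s ^ 2 * z.1 * z.2 + p * s * c * z.2 ^ 2
    + 2 * p * s * c * z.1 * z.2) * (char2 (F := F))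

lemma mulBy_conj (c p s : F) (z : F × F) :
    mulBy c p s (mulBy c (p + s) s z) = (p * p + p * s + c * (s * s)) • z := by
  rw [mulBy_apply, mulBy_apply, Prod.smul_def]
  simp only [smul_eq_mul, Prod.mk.injEq]
  constructor
  · linear_combination (c * s * p * z.2 + c * s ^ 2 * z.2) * (char2 (F := F))
  · linear_combination (s * p * z.1 + s ^ 2 * z.1 + p * s * z.2 + s ^ 2 * z.2) * (char2 (F := F))

lemma conj_mulBy (c p s : F) (z : F × F) :
    mulBy c (p + s) s (mulBy c p s z) = (p * p + p * s + c * (s * s)) • z := by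
  rw [mulBy_apply, mulBy_apply, Prod.smul_def]
  simp only [smul_eq_mul, Prod.mk.injEq]
  constructor
  · linear_combination (c * s * p * z.2 + c * s ^ 2 * z.2) * (char2 (F := F))
  · linear_combination (s * p * z.1 + s ^ 2 * z.1 + p * s * z.2 + s ^ 2 * z.2) * (char2 (F := F))

lemma binQF_sim (c : F) {x : F} (hx : x ≠ 0) (hrep : ∃ z, binQF F 1 c z = x) :
    IsSim (binQF F 1 c) x := by
  obtain ⟨⟨p, s⟩, hz⟩ := hrep
  have hN : p * p + p * s + c * (s * s) = x := by
    rw [binQF_apply] at hz; exact hz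
  set L : (F × F) ≃ₗ[F] (F × F) := LinearEquiv.ofLinear (mulBy c p s)
    (x⁻¹ • mulBy c (p + s) s)
    (LinearMap.ext fun z => by
      simp only [LinearMap.comp_apply, LinearMap.smul_apply, LinearMap.id_apply,
        _root_.map_smul, mulBy_conj, hN, smul_smul, inv_mul_cancel₀ hx, one_smul])
    (LinearMap.ext fun z => by
      simp only [LinearMap.comp_apply, LinearMap.smul_apply, LinearMap.id_apply,
        conj_mulBy, hN, smul_smul, inv_mul_cancel₀ hx, one_smul]) with hL
  refine QuadraticMap.Equivalent.symm ⟨{ L with map_app' := fun m => ?_ }⟩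
  show binQF F 1 c (mulBy c p s m) = (x • binQF F 1 c) m
  rw [binQF_mul, hN, QuadraticMap.smul_apply, smul_eq_mul]

/-- Quadratic Pfister forms are round. -/
lemma pfister_round (k : ℕ) : ∀ (b : Fin k → F) (c : F) (x : F), x ≠ 0 →
    (∃ v, pfisterQF F k b c v = x) → IsSim (pfisterQF F k b c) x := by
  induction k with
  | zero =>
    intro b c x hx hrep
    exact binQF_sim c hx hrep
  | succ k ih =>
    intro b c x hx hrep
    set π := pfisterQF F k (b ∘ Fin.castSucc) c with hπ
    set bb := b (Fin.last k) with hbb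
    have hdef : pfisterQF F (k + 1) b c = π.prod (bb • π) := rfl
    rw [hdef] at hrep ⊢
    obtain ⟨⟨u, v⟩, huv⟩ := hrep
    have hX : π u + bb * π v = x := huv
    by_cases hY0 : π v = 0
    · -- x = π u
      have hXx : π u = x := by rw [hY0, mul_zero, add_zero] at hX; exact hX
      exact IsSim.prod_smul bb (ih _ c x hx ⟨u, hXx⟩)
    by_cases hX0 : π u = 0
    · -- x = bb * π v
      have hxBY : bb * π v = x := by rw [hX0, zero_add] at hX; exact hX
      have hbb0 : bb ≠ 0 := fun h => hx (by rw [← hxBY, h, zero_mul])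
      have simY : IsSim (π.prod (bb • π)) (π v) := IsSim.prod_smul bb (ih _ c _ hY0 ⟨v, rfl⟩)
      have simB : IsSim (π.prod (bb • π)) bb := by
        have hsq : π.Equivalent ((bb * bb) • π) := IsSim.sq bb hbb0 π
        have e1 : (π.prod (bb • π)).Equivalent ((bb • π).prod π) := prod_comm_equiv _ _
        have e2 : ((bb • π).prod π).Equivalent ((bb • π).prod ((bb * bb) • π)) :=
          QuadraticMap.Equivalent.prod (QuadraticMap.Equivalent.refl _) hsq
        have e3 := e1.trans e2
        rwa [show (bb • π).prod ((bb * bb) • π) = bb • (π.prod (bb • π)) by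
          rw [smul_prod', smul_smul]] at e3
      have := simB.mul simY
      rwa [hxBY] at this
    · -- both nonzero
      set X := π u with hXdef
      set Y := π v with hYdef
      have simX : IsSim π X := ih _ c X hX0 ⟨u, rfl⟩
      have simY : IsSim π Y := ih _ c Y hY0 ⟨v, rfl⟩
      set a' := bb * Y / X with ha'
      set ρ := π.prod (a' • π) with hρ
      have hEA : 1 + a' = x / X := by
        rw [ha']
        field_simp
        linear_combination hX
      have hE0 : 1 + a' ≠ 0 := by rw [hEA]; exact div_ne_zero hx hX0
      have E2 : IsSim ρ (1 + a') := step_e π a' hE0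
      have hXa' : X * a' = bb * Y := by rw [ha']; field_simp
      have E1 : (π.prod (bb • π)).Equivalent (X • ρ) := by
        have h2 : (bb • π).Equivalent ((X * a') • π) := by
          have h3 := equiv_smul bb simY
          rwa [smul_smul, ← hXa'] at h3
        have := QuadraticMap.Equivalent.prod simX h2
        rwa [show (X • π).prod ((X * a') • π) = X • ρ by rw [hρ, smul_prod', smul_smul]] at this
      have hXe : X * (1 + a') = x := by rw [hEA]; field_simp
      have A1 : (π.prod (bb • π)).Equivalent (x • ρ) := by
        have h4 := equiv_smul X E2
        rw [smul_smul, hXe] at h4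
        exact E1.trans h4
      have A2 : (x • (π.prod (bb • π))).Equivalent (X • (x • ρ)) := by
        have h5 := equiv_smul x E1
        rwa [smul_smul, mul_comm x X, ← smul_smul] at h5
      have A3 : (X • (π.prod (bb • π))).Equivalent (X • (x • ρ)) := equiv_smul X A1
      have simX' : IsSim (π.prod (bb • π)) X := IsSim.prod_smul bb simX
      exact simX'.trans (A3.trans A2.symm)

end CharTwo
end Aux

/-- over a field of characteristic 2, if `π` is an `m`-fold quadratic Pfister
form and `c ∈ F^×` is represented by `π`, then `π ≃ c·π` and, for every `d ∈ F^×`,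
`π ⊥ d·π ≃ π ⊥ (cd)·π`. -/
theorem stmt7 (F : Type*) [Field F] [CharP F 2]
    (V : Type*) [AddCommGroup V] [Module F V] (m : ℕ) (π : QuadraticForm F V)
    (hπ : IsPfister m π) (c : F) (hc : c ≠ 0) (hrep : ∃ v : V, π v = c) :
    QuadraticMap.Equivalent π (c • π) ∧
      ∀ d : F, d ≠ 0 →
        QuadraticMap.Equivalent (π.prod (d • π)) (π.prod ((c * d) • π)) := by
  obtain ⟨b, c₀, hb, hequiv⟩ := hπ
  obtain ⟨v, hv⟩ := hrep
  have hrepρ : ∃ w, pfisterQF F (m - 1) b c₀ w = c := by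
    obtain ⟨f⟩ := hequiv
    exact ⟨f v, by rw [f.map_app, hv]⟩
  have hsρ : IsSim (pfisterQF F (m - 1) b c₀) c := pfister_round (m - 1) b c₀ c hc hrepρ
  have part1 : QuadraticMap.Equivalent π (c • π) :=
    hequiv.trans (hsρ.trans (equiv_smul c hequiv.symm))
  refine ⟨part1, fun d _ => ?_⟩
  have hd2 : QuadraticMap.Equivalent (d • π) ((c * d) • π) := by
    have h := equiv_smul d part1
    rwa [smul_smul, mul_comm d c] at h
  exact QuadraticMap.Equivalent.prod (QuadraticMap.Equivalent.refl _) hd2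
end

section
/- (Common slot lemma.) Let π and π' be m-fold quadratic Pfister forms over F and let c, c' ∈ F^× be such that π ⊥ c·π ≃ π' ⊥ c'·π'. Then there exists d ∈ F^× such that π ⊥ c·π ≃ π ⊥ d·π ≃ π' ⊥ d·π' ≃ π' ⊥ c'·π'. (In Pfister notation: if ⟨⟨c⟩⟩⊗π ≃ ⟨⟨c'⟩⟩⊗π' then there is d with ⟨⟨c⟩⟩⊗π ≃ ⟨⟨d⟩⟩⊗π ≃ ⟨⟨d⟩⟩⊗π' ≃ ⟨⟨c'⟩⟩⊗π'.) -/
/-!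
Quadratic Pfister forms in characteristic `2` are round (every nonzero value is a similarity
factor) and their polar forms are nondegenerate, so isotropic ones are universal.

If `ρ = π ⊥ c·π` is isotropic, then `c` is a value of `π` and, as `ρ ≃ π' ⊥ c'·π'`, also `c'` is a
value of `π'`; roundness gives `c·π ≃ π` and `c'·π' ≃ π'`, so `d = 1` works.

If `ρ` is anisotropic, `(c·π ⊥ c'·π') ⊥ (π ⊥ π') ≃ ρ ⊥ ρ`, where `π ⊥ π'` is isotropic because both
forms represent `1`. Since isometries of an anisotropic `ρ` move every nonzero vector (reflections),
a graph argument shows that `c·π ⊥ c'·π'` is isotropic. A zero `c·π(u) = c'·π'(v) =: d` then gives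
`d·π ≃ c·π` and `d·π' ≃ c'·π'` by roundness.
-/

open QuadraticMap Module

namespace QuadraticMap

section CommRing

variable {R M₁ M₂ N : Type*} [CommRing R] [AddCommGroup M₁] [Module R M₁]
  [AddCommGroup M₂] [Module R M₂] [AddCommGroup N] [Module R N]
  {Q₁ : QuadraticMap R M₁ N} {Q₂ : QuadraticMap R M₂ N}

theorem Equivalent.smul (h : Q₁.Equivalent Q₂) (a : R) : (a • Q₁).Equivalent (a • Q₂) :=
  h.map fun f => { f with map_app' := fun m => by simp [f.map_app] }

theorem smul_prod (a : R) (Q₁ : QuadraticMap R M₁ N) (Q₂ : QuadraticMap R M₂ N) :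
    a • Q₁.prod Q₂ = (a • Q₁).prod (a • Q₂) := by
  ext; simp [smul_add]

theorem smul_prod_smul_equivalent {Q : QuadraticMap R M₁ N} {e : R} (h : (e • Q).Equivalent Q)
    (b : R) : (e • Q.prod (b • Q)).Equivalent (Q.prod (b • Q)) := by
  rw [smul_prod, smul_comm e b]
  exact h.prod (h.smul b)

theorem Equivalent.range_eq (h : Q₁.Equivalent Q₂) : Set.range Q₁ = Set.range Q₂ := by
  obtain ⟨f⟩ := h
  ext e
  exact ⟨fun ⟨v, hv⟩ => ⟨f v, by rw [f.map_app, hv]⟩,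
    fun ⟨v, hv⟩ => ⟨f.symm v, by rw [← f.map_app, f.apply_symm_apply, hv]⟩⟩

theorem Equivalent.anisotropic_iff (h : Q₁.Equivalent Q₂) : Q₁.Anisotropic ↔ Q₂.Anisotropic := by
  obtain ⟨f⟩ := h
  refine ⟨fun h₁ v hv => ?_, fun h₂ v hv => ?_⟩
  · simpa using h₁ (f.symm v) (by rw [← f.map_app, f.apply_symm_apply, hv])
  · simpa using h₂ (f v) (by rw [f.map_app, hv])

theorem separatingLeft_polarBilin_of_equivalent (h : Q₁.Equivalent Q₂)
    (h₂ : (polarBilin Q₂).SeparatingLeft) : (polarBilin Q₁).SeparatingLeft := by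
  obtain ⟨f⟩ := h
  intro x hx
  have : f x = 0 := h₂ (f x) fun y => by
    simpa only [polarBilin_apply_apply, polar, ← f.map_app, map_add, f.apply_symm_apply]
      using hx (f.symm y)
  simpa using this

theorem separatingLeft_polarBilin_prod (h₁ : (polarBilin Q₁).SeparatingLeft)
    (h₂ : (polarBilin Q₂).SeparatingLeft) : (polarBilin (Q₁.prod Q₂)).SeparatingLeft := by
  rintro ⟨x₁, x₂⟩ hx
  refine Prod.ext (h₁ x₁ fun y => ?_) (h₂ x₂ fun y => ?_)
  · simpa using hx (y, 0)
  · simpa using hx (0, y)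

end CommRing

section Field

variable {F V W : Type*} [Field F] [AddCommGroup V] [Module F V] [AddCommGroup W] [Module F W]
  {q : QuadraticForm F V}

theorem separatingLeft_polarBilin_smul (hq : (polarBilin q).SeparatingLeft) {a : F} (ha : a ≠ 0) :
    (polarBilin (a • q)).SeparatingLeft := fun x hx =>
  hq x fun y => by simpa [polar_smul, ha] using hx y

theorem mul_self_smul_equivalent {a : F} (ha : a ≠ 0) (q : QuadraticForm F V) :
    ((a * a) • q).Equivalent q :=
  ⟨{ LinearEquiv.smulOfNeZero F V a ha with
     map_app' := fun v => by simp [QuadraticMap.map_smul] }⟩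

theorem smul_equivalent_of_comp_eq_smul {e : F} (he : e ≠ 0) (L L' : V →ₗ[F] V)
    (hLL' : L ∘ₗ L' = e • LinearMap.id) (hL'L : L' ∘ₗ L = e • LinearMap.id)
    (hL : ∀ v, q (L v) = e * q v) : (e • q).Equivalent q :=
  have hinv : L ∘ₗ (e⁻¹ • L') = .id ∧ (e⁻¹ • L') ∘ₗ L = .id := by
    simp only [LinearMap.comp_smul, LinearMap.smul_comp, hLL', hL'L, smul_smul,
      inv_mul_cancel₀ he, one_smul, and_self]
  ⟨{ toLinearEquiv := LinearEquiv.ofLinearMap L (e⁻¹ • L') hinv.1 hinv.2, map_app' := hL }⟩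

theorem surjective_of_not_anisotropic (hsep : (polarBilin q).SeparatingLeft)
    (hq : ¬ q.Anisotropic) : Function.Surjective q := by
  obtain ⟨v, hv, hv0⟩ : ∃ v, q v = 0 ∧ v ≠ 0 := by simpa [Anisotropic] using hq
  obtain ⟨w, hw⟩ : ∃ w, polar q v w ≠ 0 := by
    by_contra! h
    exact hv0 (hsep v fun w => by simpa using h w)
  intro a
  refine ⟨((a - q w) / polar q v w) • v + w, ?_⟩
  rw [QuadraticMap.map_add q, QuadraticMap.map_smul, polar_smul_left, hv, smul_eq_mul, smul_eq_mul]
  field_simp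
  ring

noncomputable def reflection (q : QuadraticForm F V) {w : V} (hw : q w ≠ 0) :
    q.IsometryEquiv q where
  toLinearEquiv := Module.reflection (x := w) (f := (q w)⁻¹ • polarBilin q w) <| by
    simp [polar_self, mul_left_comm _ (2 : F), hw]
  map_app' v := by
    change q (v - ((q w)⁻¹ * polar q w v) • w) = q v
    rw [sub_eq_add_neg, ← neg_smul, QuadraticMap.map_add q, QuadraticMap.map_smul,
      polar_smul_right, polar_comm, smul_eq_mul, smul_eq_mul]
    field_simp
    ring

theorem reflection_apply {w : V} (hw : q w ≠ 0) (v : V) :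
    q.reflection hw v = v - ((q w)⁻¹ * polar q w v) • w :=
  rfl

theorem exists_isometryEquiv_apply_ne (hq : q.Anisotropic) (hsep : (polarBilin q).SeparatingLeft)
    {z : V} (hz : z ≠ 0) : ∃ σ : q.IsometryEquiv q, σ z ≠ z := by
  obtain ⟨w, hw⟩ : ∃ w, polar q w z ≠ 0 := by
    by_contra! h
    exact hz (hsep z fun w => by simpa [polar_comm] using h w)
  have hw0 : w ≠ 0 := by rintro rfl; simp at hw
  have hqw : q w ≠ 0 := fun h => hw0 (hq w h)
  refine ⟨q.reflection hqw, ?_⟩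
  simp [reflection_apply, hqw, hw, hw0]

def IsRound (q : QuadraticForm F V) : Prop :=
  ∀ e ∈ Set.range q, e ≠ 0 → (e • q).Equivalent q

theorem IsRound.of_equivalent {q' : QuadraticForm F W} (h : q.Equivalent q') (hr : q'.IsRound) :
    q.IsRound := fun e he he0 =>
  ((h.smul e).trans (hr e (h.range_eq ▸ he) he0)).trans h.symm

theorem IsRound.mul_smul_equivalent (hr : q.IsRound) {e : F} (he : e ∈ Set.range q) (he0 : e ≠ 0)
    (a : F) : ((a * e) • q).Equivalent (a • q) := by
  rw [mul_smul]
  exact (hr e he he0).smul a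

theorem IsRound.mem_range_of_mul_mem_range (hr : q.IsRound) {e a : F} (he : e ∈ Set.range q)
    (he0 : e ≠ 0) (h : e * a ∈ Set.range q) : a ∈ Set.range q := by
  obtain ⟨σ⟩ := hr e he he0
  obtain ⟨v, hv⟩ := h
  refine ⟨σ.symm v, mul_left_cancel₀ he0 ?_⟩
  simpa [hv] using σ.symm.map_app v

end Field

section CharTwo

variable {F V W X Y : Type*} [Field F] [CharP F 2] [AddCommGroup V] [Module F V]
  [AddCommGroup W] [Module F W] [AddCommGroup X] [Module F X] [AddCommGroup Y] [Module F Y]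
  {q : QuadraticForm F V}

theorem not_anisotropic_prod_of_mem_range {q' : QuadraticForm F W} {a : F} (ha : a ≠ 0)
    (h : a ∈ Set.range q) (h' : a ∈ Set.range q') : ¬ (q.prod q').Anisotropic := by
  obtain ⟨u, hu⟩ := h
  obtain ⟨u', hu'⟩ := h'
  intro hq
  have : (u, u') = 0 := hq _ (by simp [hu, hu', CharTwo.add_self_eq_zero])
  simp_all

theorem IsRound.mem_range_of_not_anisotropic_prod_smul (hr : q.IsRound)
    (hsep : (polarBilin q).SeparatingLeft) {c : F} (h : ¬ (q.prod (c • q)).Anisotropic) :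
    c ∈ Set.range q := by
  by_cases hq : q.Anisotropic
  · obtain ⟨⟨u, v⟩, huv, hne⟩ : ∃ x, q.prod (c • q) x = 0 ∧ x ≠ 0 := by
      simpa [Anisotropic] using h
    simp only [prod_apply, smul_apply, smul_eq_mul, CharTwo.add_eq_zero] at huv
    have hv : q v ≠ 0 := fun hv => hne (by simp [hq v hv, hq u (by rw [huv, hv, mul_zero])])
    exact hr.mem_range_of_mul_mem_range ⟨v, rfl⟩ hv ⟨u, by rw [huv, mul_comm]⟩
  · exact surjective_of_not_anisotropic hsep hq c

/-- `(x, y) ↦ (x + t y, x + y)` multiplies `q ⊥ t q` by `1 + t` and squares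
to `1 + t`. -/
theorem one_add_smul_prod_smul_equivalent (q : QuadraticForm F V) {t : F} (ht : 1 + t ≠ 0) :
    ((1 + t) • q.prod (t • q)).Equivalent (q.prod (t • q)) := by
  let T : V × V →ₗ[F] V × V :=
    (LinearMap.fst F V V + t • LinearMap.snd F V V).prod (LinearMap.fst F V V + LinearMap.snd F V V)
  have hT : T ∘ₗ T = (1 + t) • LinearMap.id := by
    have h2 (y : V) : y + y = 0 := by rw [← two_smul F y, CharTwo.two_eq_zero, zero_smul]
    ext x <;> simp [T, h2] <;> module
  refine smul_equivalent_of_comp_eq_smul ht T T hT hT fun x => ?_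
  change q (x.1 + t • x.2) + t * q (x.1 + x.2) = (1 + t) * (q x.1 + t * q x.2)
  rw [QuadraticMap.map_add q, QuadraticMap.map_add q, QuadraticMap.map_smul, polar_smul_right,
    smul_eq_mul, smul_eq_mul]
  linear_combination (t * polar q x.1 x.2) * CharTwo.two_eq_zero (R := F)

theorem IsRound.prod_smul (hr : q.IsRound) {b : F} (hb : b ≠ 0) : (q.prod (b • q)).IsRound := by
  rintro _ ⟨⟨u, v⟩, rfl⟩ he
  simp only [prod_apply, smul_apply, smul_eq_mul] at he ⊢
  have hu : q u ∈ Set.range q := ⟨u, rfl⟩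
  have hv : q v ∈ Set.range q := ⟨v, rfl⟩
  rcases eq_or_ne (q v) 0 with hv0 | hv0
  · rw [hv0, mul_zero, add_zero] at he ⊢
    exact smul_prod_smul_equivalent (hr _ hu he) b
  rcases eq_or_ne (q u) 0 with hu0 | hu0
  · rw [hu0, zero_add, smul_prod, smul_smul, show b * q v * b = b * b * q v by ring]
    refine ((hr.mul_smul_equivalent hv hv0 b).prod ?_).trans ⟨IsometryEquiv.prodComm _ _⟩
    exact (hr.mul_smul_equivalent hv hv0 (b * b)).trans (mul_self_smul_equivalent hb q)
  obtain ⟨t, ht⟩ : ∃ t, t * q u = b * q v := ⟨_, div_mul_cancel₀ _ hu0⟩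
  have hbt : (b • q).Equivalent (t • q) := by
    refine (hr.mul_smul_equivalent hv hv0 b).symm.trans ?_
    rw [← ht]
    exact hr.mul_smul_equivalent hu hu0 t
  have hρ := (Equivalent.refl q).prod hbt
  have he' : q u + b * q v = q u * (1 + t) := by rw [← ht]; ring
  have h1t : 1 + t ≠ 0 := fun h => he (by rw [he', h, mul_zero])
  refine (hρ.smul _).trans (Equivalent.trans ?_ hρ.symm)
  rw [he', mul_smul]
  exact ((one_add_smul_prod_smul_equivalent q h1t).smul _).trans
    (smul_prod_smul_equivalent (hr _ hu hu0) t)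


/-- In characteristic `2` the graph of any isometry `σ` of `ρ` is totally isotropic in `ρ ⊥ ρ`.
Pulled back to `φ ⊥ ψ` with `φ` anisotropic, it projects isomorphically onto `Y`, so every graph
contains the preimage of one isotropic vector of `ψ`: a nonzero vector fixed by all `σ`. -/
theorem not_anisotropic_of_prod_equivalent_prod_self [FiniteDimensional F W]
    [FiniteDimensional F Y] {φ : QuadraticForm F X} {ψ : QuadraticForm F Y}
    {ρ : QuadraticForm F W} (hdim : finrank F W = finrank F Y)
    (hmove : ∀ z ≠ 0, ∃ σ : ρ.IsometryEquiv ρ, σ z ≠ z) (hψ : ¬ ψ.Anisotropic)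
    (h : (φ.prod ψ).Equivalent (ρ.prod ρ)) : ¬ φ.Anisotropic := by
  intro hφ
  obtain ⟨E⟩ := h
  obtain ⟨y, hy, hy0⟩ : ∃ y, ψ y = 0 ∧ y ≠ 0 := by simpa [Anisotropic] using hψ
  have hfst (p : X × Y) (hp : φ.prod ψ p = 0) (h2 : ψ p.2 = 0) : p.1 = 0 :=
    hφ _ (by simpa [h2] using hp)
  have key (σ : ρ.IsometryEquiv ρ) : σ (E (0, y)).1 = (E (0, y)).2 := by
    let g : W →ₗ[F] X × Y :=
      E.symm.toLinearEquiv.toLinearMap ∘ₗ LinearMap.id.prod σ.toLinearEquiv.toLinearMap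
    have hg (x : W) : φ.prod ψ (g x) = 0 := by
      have := E.symm.map_app (x, σ x)
      simp only [prod_apply, σ.map_app, CharTwo.add_self_eq_zero] at this
      exact this
    have hinj : Function.Injective (LinearMap.snd F X Y ∘ₗ g) := by
      rw [← LinearMap.ker_eq_bot, LinearMap.ker_eq_bot']
      intro x hx
      have : g x = 0 := Prod.ext (hfst _ (hg x) (by simp_all)) hx
      simpa [g] using this
    obtain ⟨x, hx⟩ := (LinearMap.injective_iff_surjective_of_finrank_eq_finrank hdim).mp hinj y
    have : g x = (0, y) := Prod.ext (hfst _ (hg x) (by simp_all)) hx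
    simp [← this, g]
  have hz : (E (0, y)).2 = (E (0, y)).1 := (key (IsometryEquiv.refl ρ)).symm
  have hz0 : (E (0, y)).1 ≠ 0 := fun h0 =>
    hy0 (by simpa using (Prod.ext h0 (hz.trans h0) : E (0, y) = 0))
  obtain ⟨σ, hσ⟩ := hmove _ hz0
  exact hσ ((key σ).trans hz)

theorem exists_smul_equivalent_of_anisotropic [FiniteDimensional F V] [FiniteDimensional F W]
    {π : QuadraticForm F V} {π' : QuadraticForm F W} (hr : π.IsRound) (hr' : π'.IsRound)
    (h1 : 1 ∈ Set.range π) (h1' : 1 ∈ Set.range π') (hdim : finrank F V = finrank F W)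
    (hsep : (polarBilin π).SeparatingLeft) {c c' : F} (hc : c ≠ 0) (hc' : c' ≠ 0)
    (hρ : (π.prod (c • π)).Anisotropic) (h : (π.prod (c • π)).Equivalent (π'.prod (c' • π'))) :
    ∃ d : F, d ≠ 0 ∧ (d • π).Equivalent (c • π) ∧ (d • π').Equivalent (c' • π') := by
  have hπ : π.Anisotropic := (anisotropic_of_prod hρ).1
  have hπ' : π'.Anisotropic := (anisotropic_of_prod (h.anisotropic_iff.mp hρ)).1
  have hΘ : (((c • π).prod (c' • π')).prod (π.prod π')).Equivalent
      ((π.prod (c • π)).prod (π.prod (c • π))) := by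
    obtain ⟨g⟩ := h
    exact ⟨(IsometryEquiv.prodProdProdComm _ _ _ _).trans
      (((IsometryEquiv.prodComm _ _).prod (IsometryEquiv.prodComm _ _)).trans
        ((IsometryEquiv.refl _).prod g.symm))⟩
  have hφ := not_anisotropic_of_prod_equivalent_prod_self (by simp [finrank_prod, hdim])
    (fun _ hz => exists_isometryEquiv_apply_ne hρ
      (separatingLeft_polarBilin_prod hsep (separatingLeft_polarBilin_smul hsep hc)) hz)
    (not_anisotropic_prod_of_mem_range one_ne_zero h1 h1') hΘ
  obtain ⟨⟨u, v⟩, huv, hne⟩ : ∃ x, (c • π).prod (c' • π') x = 0 ∧ x ≠ 0 := by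
    simpa [Anisotropic] using hφ
  simp only [prod_apply, smul_apply, smul_eq_mul, CharTwo.add_eq_zero] at huv
  have hv : π' v ≠ 0 := fun hv =>
    hne (by simp [hπ' v hv, hπ u (by simpa [hv, hc] using huv)])
  have hu : π u ≠ 0 := fun hu => hv (by simpa [hu, hc'] using huv.symm)
  refine ⟨c * π u, mul_ne_zero hc hu, hr.mul_smul_equivalent ⟨u, rfl⟩ hu c, ?_⟩
  rw [huv]
  exact hr'.mul_smul_equivalent ⟨v, rfl⟩ hv c'

end CharTwo

end QuadraticMap

section Pfister

variable {F : Type*} [Field F]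

theorem binQF_apply_s8 (b₁ b₂ : F) (p : F × F) :
    binQF F b₁ b₂ p = b₁ * (p.1 * p.1) + p.1 * p.2 + b₂ * (p.2 * p.2) := by
  simp [binQF, LinearMap.BilinMap.toQuadraticMap_apply]

variable (F) in
instance PfM.instFiniteDimensional : ∀ k, FiniteDimensional F (PfM F k)
  | 0 => inferInstanceAs (FiniteDimensional F (F × F))
  | k + 1 =>
    letI := PfM.instFiniteDimensional k
    inferInstanceAs (FiniteDimensional F (PfM F k × PfM F k))

theorem one_mem_range_pfisterQF : ∀ k (b : Fin k → F) (c : F), 1 ∈ Set.range (pfisterQF F k b c)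
  | 0, _, c => ⟨(1, 0), show binQF F 1 c (1, 0) = 1 by rw [binQF_apply_s8]; ring⟩
  | k + 1, b, c =>
    let ⟨v, hv⟩ := one_mem_range_pfisterQF k (b ∘ Fin.castSucc) c
    ⟨(v, 0), show (pfisterQF F k _ c).prod _ (v, 0) = 1 by rw [prod_apply, hv, map_zero, add_zero]⟩

namespace IsPfister

variable {V V' : Type*} [AddCommGroup V] [Module F V] [AddCommGroup V'] [Module F V'] {m : ℕ}
  {π : QuadraticForm F V} {π' : QuadraticForm F V'}

theorem finiteDimensional (hπ : IsPfister m π) : FiniteDimensional F V := by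
  obtain ⟨_, _, -, ⟨f⟩⟩ := hπ
  exact f.toLinearEquiv.symm.finiteDimensional

theorem finrank_eq_finrank (hπ : IsPfister m π) (hπ' : IsPfister m π') :
    finrank F V = finrank F V' := by
  obtain ⟨_, _, -, ⟨f⟩⟩ := hπ
  obtain ⟨_, _, -, ⟨f'⟩⟩ := hπ'
  rw [f.toLinearEquiv.finrank_eq, f'.toLinearEquiv.finrank_eq]

theorem one_mem_range (hπ : IsPfister m π) : 1 ∈ Set.range π := by
  obtain ⟨b, c, -, h⟩ := hπ
  exact h.range_eq ▸ one_mem_range_pfisterQF _ b c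

end IsPfister

variable [CharP F 2]

theorem polar_binQF_one (c : F) (z w : F × F) :
    polar (binQF F 1 c) z w = z.1 * w.2 + z.2 * w.1 := by
  simp only [polar, binQF_apply_s8, Prod.fst_add, Prod.snd_add]
  linear_combination (z.1 * w.1 + c * z.2 * w.2) * CharTwo.two_eq_zero (R := F)

theorem separatingLeft_polarBilin_binQF_one (c : F) :
    (polarBilin (binQF F 1 c)).SeparatingLeft := by
  rintro ⟨z₁, z₂⟩ hz
  have h₁ := hz (0, 1)
  have h₂ := hz (1, 0)
  simp only [polarBilin_apply_apply, polar_binQF_one] at h₁ h₂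
  simp_all

/-- `binQF F 1 c` is the norm form of `F[ω]/(ω² + ω + c)`: `L` is multiplication by `x + yω`,
`L'` by its conjugate `x + y + yω`. -/
theorem isRound_binQF_one (c : F) : (binQF F 1 c).IsRound := by
  rintro _ ⟨⟨x, y⟩, rfl⟩ he
  let L : F × F →ₗ[F] F × F :=
    (x • LinearMap.fst F F F + (c * y) • LinearMap.snd F F F).prod
      (y • LinearMap.fst F F F + (x + y) • LinearMap.snd F F F)
  let L' : F × F →ₗ[F] F × F :=
    ((x + y) • LinearMap.fst F F F + (c * y) • LinearMap.snd F F F).prod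
      (y • LinearMap.fst F F F + x • LinearMap.snd F F F)
  refine smul_equivalent_of_comp_eq_smul he L L' ?_ ?_ fun p => ?_
  · ext <;> simp [L, L', binQF_apply_s8] <;> grind
  · ext <;> simp [L, L', binQF_apply_s8] <;> grind
  · change binQF F 1 c (x * p.1 + c * y * p.2, y * p.1 + (x + y) * p.2) = _
    simp only [binQF_apply_s8]
    grind

theorem isRound_pfisterQF :
    ∀ k (b : Fin k → F) (c : F), (∀ i, b i ≠ 0) → (pfisterQF F k b c).IsRound
  | 0, _, c, _ => isRound_binQF_one c
  | k + 1, _, c, hb =>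
    (isRound_pfisterQF k _ c fun _ => hb _).prod_smul (hb (Fin.last k))

theorem separatingLeft_polarBilin_pfisterQF :
    ∀ k (b : Fin k → F) (c : F), (∀ i, b i ≠ 0) → (polarBilin (pfisterQF F k b c)).SeparatingLeft
  | 0, _, c, _ => separatingLeft_polarBilin_binQF_one c
  | k + 1, _, c, hb =>
    have ih := separatingLeft_polarBilin_pfisterQF k _ c fun _ => hb _
    separatingLeft_polarBilin_prod ih (separatingLeft_polarBilin_smul ih (hb (Fin.last k)))

namespace IsPfister

variable {V : Type*} [AddCommGroup V] [Module F V] {m : ℕ} {π : QuadraticForm F V}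

theorem isRound (hπ : IsPfister m π) : π.IsRound := by
  obtain ⟨b, c, hb, h⟩ := hπ
  exact .of_equivalent h (isRound_pfisterQF _ b c hb)

theorem separatingLeft (hπ : IsPfister m π) : (polarBilin π).SeparatingLeft := by
  obtain ⟨b, c, hb, h⟩ := hπ
  exact separatingLeft_polarBilin_of_equivalent h (separatingLeft_polarBilin_pfisterQF _ b c hb)

end IsPfister

end Pfister

/-- common slot lemma: over a field of characteristic 2, if `π`, `π'` are
`m`-fold quadratic Pfister forms and `c, c' ∈ F^×` satisfy `π ⊥ c·π ≃ π' ⊥ c'·π'`, then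
there is `d ∈ F^×` with `π ⊥ c·π ≃ π ⊥ d·π ≃ π' ⊥ d·π' ≃ π' ⊥ c'·π'`. -/
theorem stmt8 (F : Type*) [Field F] [CharP F 2]
    (V : Type*) [AddCommGroup V] [Module F V]
    (V' : Type*) [AddCommGroup V'] [Module F V'] (m : ℕ)
    (π : QuadraticForm F V) (π' : QuadraticForm F V')
    (hπ : IsPfister m π) (hπ' : IsPfister m π')
    (c c' : F) (hc : c ≠ 0) (hc' : c' ≠ 0)
    (h : QuadraticMap.Equivalent (π.prod (c • π)) (π'.prod (c' • π'))) :
    ∃ d : F, d ≠ 0 ∧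
      QuadraticMap.Equivalent (π.prod (c • π)) (π.prod (d • π)) ∧
      QuadraticMap.Equivalent (π.prod (d • π)) (π'.prod (d • π')) ∧
      QuadraticMap.Equivalent (π'.prod (d • π')) (π'.prod (c' • π')) := by
  suffices ∃ d : F, d ≠ 0 ∧ (d • π).Equivalent (c • π) ∧ (d • π').Equivalent (c' • π') by
    obtain ⟨d, hd, e, e'⟩ := this
    have h₁ := (Equivalent.refl π).prod e.symm
    have h₂ := (Equivalent.refl π').prod e'.symm
    exact ⟨d, hd, h₁, h₁.symm.trans (h.trans h₂), h₂.symm⟩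
  by_cases hρ : (π.prod (c • π)).Anisotropic
  · have := hπ.finiteDimensional
    have := hπ'.finiteDimensional
    exact exists_smul_equivalent_of_anisotropic hπ.isRound hπ'.isRound hπ.one_mem_range
      hπ'.one_mem_range (hπ.finrank_eq_finrank hπ') hπ.separatingLeft hc hc' hρ h
  · have hcπ := hπ.isRound.mem_range_of_not_anisotropic_prod_smul hπ.separatingLeft hρ
    have hcπ' := hπ'.isRound.mem_range_of_not_anisotropic_prod_smul hπ'.separatingLeft
      (h.anisotropic_iff.not.mp hρ)
    refine ⟨1, one_ne_zero, ?_, ?_⟩ <;> rw [one_smul]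
    · exact (hπ.isRound c hcπ hc).symm
    · exact (hπ'.isRound c' hcπ' hc').symm
end
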